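/- arXiv:2505.03081 — 3 statements merged into one kernel-verified Lean document; each statement's English description precedes it below -/
import Mathlib

section
/- Let S be a Lie inverse semialgebra over a field F. Then for all x, y ∈ S and every additive idempotent e of S: (1) [x, neg y] = neg [x,y] = [neg x, y]; (2) [x,e] is an additive idempotent; (3) 0_{[x,y]} ⪯ [x,0_y] + [0_x,y] + 0_{x+y}; (4) if char F ≠ 2, then [x,x] ⪯ 0_x. -/
/-- An inverse semivector space over a field `F`. -/
structure InvSemivectorSpace (F : Type*) [Field F] (V : Type*) where
  add : V → V → V
  neg : V → V
  smul : F → V → V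
  add_comm' : ∀ x y : V, add x y = add y x
  add_assoc' : ∀ x y z : V, add (add x y) z = add x (add y z)
  add_neg_add : ∀ x : V, add (add x (neg x)) x = x
  neg_add_neg : ∀ x : V, add (add (neg x) x) (neg x) = neg x
  add_smul' : ∀ (α β : F) (x : V), smul (α + β) x = add (smul α x) (smul β x)
  smul_add' : ∀ (α : F) (x y : V), smul α (add x y) = add (smul α x) (smul α y)
  smul_smul' : ∀ (α β : F) (x : V), smul α (smul β x) = smul (α * β) x
  one_smul' : ∀ x : V, smul 1 x = x

namespace InvSemivectorSpace

variable {F : Type*} [Field F] {V : Type*} (S : InvSemivectorSpace F V)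

/-- `0_x := x + neg x`. -/
def z0 (x : V) : V := S.add x (S.neg x)

/-- The natural partial order: `x ⪯ y` iff `x = y + 0_x`. -/
def le (x y : V) : Prop := x = S.add y (S.z0 x)

/-- Additive idempotents. -/
def IsIdem (e : V) : Prop := S.add e e = e

end InvSemivectorSpace


/-- A Lie inverse semialgebra over `F`. -/
structure LieInvSemialgebra (F : Type*) [Field F] (V : Type*) extends
    InvSemivectorSpace F V where
  br : V → V → V
  smul_br : ∀ (α : F), α ≠ 0 → ∀ x y : V, smul α (br x y) = br (smul α x) y
  br_smul : ∀ (α : F), α ≠ 0 → ∀ x y : V, smul α (br x y) = br x (smul α y)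
  br_add_le : ∀ x y z : V,
    toInvSemivectorSpace.le (add (br x y) (br x z)) (br x (add y z))
  br_skew : ∀ x y : V, br x y = neg (br y x)
  br_idem_add : ∀ x z e : V, toInvSemivectorSpace.IsIdem e →
    br x (add e z) = add (br x e) (br x z)
  jacobi_le : ∀ x y z : V,
    toInvSemivectorSpace.le
      (add (add (br (br x y) z) (br (br y z) x)) (br (br z x) y))
      (toInvSemivectorSpace.z0 (add (add x y) z))
  br_idem : ∀ e f : V, toInvSemivectorSpace.IsIdem e → toInvSemivectorSpace.IsIdem f →
    br e f = add e f

section Aux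

namespace InvSemivectorSpace

variable {F : Type*} [Field F] {V : Type*}

instance instAssoc (T : InvSemivectorSpace F V) : Std.Associative T.add := ⟨T.add_assoc'⟩
instance instComm (T : InvSemivectorSpace F V) : Std.Commutative T.add := ⟨T.add_comm'⟩

variable {T : InvSemivectorSpace F V}

lemma inv_side {x a b : V} (h2 : T.add (T.add a x) a = a)
    (h3 : T.add (T.add x b) x = x) : a = T.add (T.add a x) b :=
  calc a = T.add (T.add a x) a := h2.symm
    _ = T.add (T.add a (T.add (T.add x b) x)) a := by rw [h3]
    _ = T.add (T.add (T.add (T.add a x) a) x) b := by ac_rfl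
    _ = T.add (T.add a x) b := by rw [h2]

lemma inv_unique {x a b : V} (h1 : T.add (T.add x a) x = x)
    (h2 : T.add (T.add a x) a = a) (h3 : T.add (T.add x b) x = x)
    (h4 : T.add (T.add b x) b = b) : a = b :=
  calc a = T.add (T.add a x) b := inv_side h2 h3
    _ = T.add (T.add b x) a := by ac_rfl
    _ = b := (inv_side h4 h1).symm

lemma neg_eq (x : V) : T.neg x = T.smul (-1) x := by
  have h3 : T.add (T.add x (T.smul (-1) x)) x = x := by
    calc T.add (T.add x (T.smul (-1) x)) x
        = T.add (T.add (T.smul 1 x) (T.smul (-1) x)) (T.smul 1 x) := by rw [T.one_smul']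
      _ = T.smul ((1 : F) + (-1) + 1) x := by rw [T.add_smul', T.add_smul']
      _ = T.smul 1 x := by norm_num
      _ = x := T.one_smul' x
  have h4 : T.add (T.add (T.smul (-1) x) x) (T.smul (-1) x) = T.smul (-1) x := by
    calc T.add (T.add (T.smul (-1) x) x) (T.smul (-1) x)
        = T.add (T.add (T.smul (-1) x) (T.smul 1 x)) (T.smul (-1) x) := by rw [T.one_smul']
      _ = T.smul ((-1 : F) + 1 + -1) x := by rw [T.add_smul', T.add_smul']
      _ = T.smul (-1) x := by norm_num
  exact inv_unique (T.add_neg_add x) (T.neg_add_neg x) h3 h4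

lemma neg_add (x y : V) : T.neg (T.add x y) = T.add (T.neg x) (T.neg y) := by
  simp only [neg_eq, T.smul_add']

lemma neg_idem {e : V} (he : T.IsIdem e) : T.neg e = e := by
  have h3 : T.add (T.add e e) e = e := by rw [he, he]
  exact inv_unique (T.add_neg_add e) (T.neg_add_neg e) h3 h3

lemma z0_def (x : V) : T.z0 x = T.add x (T.neg x) := rfl

lemma z0_eq (x : V) : T.z0 x = T.smul 0 x := by
  rw [z0_def, neg_eq]
  calc T.add x (T.smul (-1) x) = T.add (T.smul 1 x) (T.smul (-1) x) := by rw [T.one_smul']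
    _ = T.smul ((1 : F) + -1) x := by rw [T.add_smul']
    _ = T.smul 0 x := by norm_num

lemma z0_idem (x : V) : T.IsIdem (T.z0 x) := by
  show T.add (T.z0 x) (T.z0 x) = T.z0 x
  rw [z0_eq, ← T.add_smul']; norm_num

lemma z0_add (x y : V) : T.z0 (T.add x y) = T.add (T.z0 x) (T.z0 y) := by
  simp only [z0_eq, T.smul_add']

lemma idem_z0 {e : V} (he : T.IsIdem e) : T.z0 e = e := by
  rw [z0_def, neg_idem he]; exact he

lemma neg_z0 (x : V) : T.neg (T.z0 x) = T.z0 x := neg_idem (z0_idem x)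

lemma z0_neg (x : V) : T.z0 (T.neg x) = T.z0 x := by
  simp only [neg_eq, z0_eq, T.smul_smul']; norm_num

lemma le_def (x y : V) : T.le x y ↔ x = T.add y (T.z0 x) := Iff.rfl

lemma le_trans' {a b c : V} (h1 : T.le a b) (h2 : T.le b c) : T.le a c := by
  rw [le_def] at *
  have hz : T.z0 a = T.add (T.z0 b) (T.z0 a) := by
    conv_lhs => rw [h1, z0_add, idem_z0 (z0_idem a)]
  calc a = T.add b (T.z0 a) := h1
    _ = T.add (T.add c (T.z0 b)) (T.z0 a) := by rw [← h2]
    _ = T.add c (T.add (T.z0 b) (T.z0 a)) := T.add_assoc' _ _ _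
    _ = T.add c (T.z0 a) := by rw [← hz]

lemma idem_le {e y : V} (he : T.IsIdem e) (h : e = T.add e y) : T.le e y := by
  rw [le_def, idem_z0 he]
  exact h.trans (T.add_comm' _ _)

lemma idem_le_elim {e y : V} (he : T.IsIdem e) (h : T.le e y) : e = T.add e y := by
  rw [le_def, idem_z0 he] at h
  exact h.trans (T.add_comm' _ _)

lemma neg_le_neg {a b : V} (h : T.le a b) : T.le (T.neg a) (T.neg b) := by
  rw [le_def] at *
  rw [z0_neg]
  calc T.neg a = T.neg (T.add b (T.z0 a)) := by rw [← h]
    _ = T.add (T.neg b) (T.neg (T.z0 a)) := neg_add _ _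
    _ = T.add (T.neg b) (T.z0 a) := by rw [neg_z0]

end InvSemivectorSpace

namespace LieInvSemialgebra

open InvSemivectorSpace

variable {F : Type*} [Field F] {V : Type*} {S : LieInvSemialgebra F V}

lemma br_neg (x y : V) : S.br x (S.neg y) = S.neg (S.br x y) := by
  simp only [neg_eq]
  exact (S.br_smul (-1) (by norm_num) x y).symm

lemma neg_br (x y : V) : S.neg (S.br x y) = S.br (S.neg x) y := by
  simp only [neg_eq]
  exact S.smul_br (-1) (by norm_num) x y

lemma br_idem_right {e : V} (x : V) (he : S.IsIdem e) : S.IsIdem (S.br x e) := by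
  show S.add (S.br x e) (S.br x e) = S.br x e
  rw [← S.br_idem_add x e e he, he]

lemma br_idem_left {e : V} (y : V) (he : S.IsIdem e) : S.IsIdem (S.br e y) := by
  rw [S.br_skew e y, neg_idem (br_idem_right y he)]
  exact br_idem_right y he

lemma z0_br_le_right (x y : V) : S.le (S.z0 (S.br x y)) (S.br x (S.z0 y)) := by
  have h := S.br_add_le x y (S.neg y)
  rw [br_neg, ← z0_def, ← z0_def] at h
  exact h

lemma z0_br_le_left (x y : V) : S.le (S.z0 (S.br x y)) (S.br (S.z0 x) y) := by
  have h := InvSemivectorSpace.neg_le_neg (T := S.toInvSemivectorSpace) (z0_br_le_right y x)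
  rw [neg_z0, ← S.br_skew, S.br_skew y x, z0_neg] at h
  exact h

lemma br_z0_le (x y : V) : S.le (S.br (S.z0 x) y) (S.add (S.z0 x) (S.z0 y)) := by
  have h := S.br_add_le (S.z0 x) y (S.neg y)
  rw [br_neg, neg_idem (br_idem_left y (z0_idem x)), br_idem_left y (z0_idem x),
    ← z0_def, S.br_idem _ _ (z0_idem x) (z0_idem y)] at h
  exact h

lemma br_z0_le' (x y : V) : S.le (S.br x (S.z0 y)) (S.add (S.z0 x) (S.z0 y)) := by
  have h := br_z0_le (S := S) y x
  rw [S.toInvSemivectorSpace.add_comm' (S.z0 y) (S.z0 x)] at h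
  rw [S.br_skew x (S.z0 y), neg_idem (br_idem_left x (z0_idem y))]
  exact h

end LieInvSemialgebra

end Aux

theorem stmt_5 {F : Type*} [Field F] {V : Type*} (S : LieInvSemialgebra F V) :
    -- (1)
    (∀ x y : V, S.br x (S.neg y) = S.neg (S.br x y) ∧ S.neg (S.br x y) = S.br (S.neg x) y) ∧
    -- (2)
    (∀ x e : V, S.IsIdem e → S.IsIdem (S.br x e)) ∧
    -- (3)
    (∀ x y : V,
      S.le (S.z0 (S.br x y))
        (S.add (S.add (S.br x (S.z0 y)) (S.br (S.z0 x) y)) (S.z0 (S.add x y)))) ∧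
    -- (4)
    (ringChar F ≠ 2 → ∀ x : V, S.le (S.br x x) (S.z0 x)) := by
  open InvSemivectorSpace LieInvSemialgebra in
  refine ⟨fun x y => ⟨br_neg x y, neg_br x y⟩, fun x e he => br_idem_right x he, ?_, ?_⟩
  · intro x y
    have hL : S.IsIdem (S.z0 (S.br x y)) := z0_idem _
    have hLA := idem_le_elim hL (z0_br_le_right x y)
    have hLB := idem_le_elim hL (z0_br_le_left x y)
    have hLC := idem_le_elim hL (InvSemivectorSpace.le_trans' (T := S.toInvSemivectorSpace) (z0_br_le_left x y) (br_z0_le x y))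
    apply idem_le hL
    rw [z0_add]
    have key : S.add (S.z0 (S.br x y))
        (S.add (S.add (S.br x (S.z0 y)) (S.br (S.z0 x) y)) (S.add (S.z0 x) (S.z0 y)))
        = S.z0 (S.br x y) := by
      calc S.add (S.z0 (S.br x y))
            (S.add (S.add (S.br x (S.z0 y)) (S.br (S.z0 x) y)) (S.add (S.z0 x) (S.z0 y)))
          = S.add (S.add (S.z0 (S.br x y)) (S.br x (S.z0 y)))
              (S.add (S.br (S.z0 x) y) (S.add (S.z0 x) (S.z0 y))) := by ac_rfl
        _ = S.add (S.z0 (S.br x y)) (S.add (S.br (S.z0 x) y) (S.add (S.z0 x) (S.z0 y))) := by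
              rw [← hLA]
        _ = S.add (S.add (S.z0 (S.br x y)) (S.br (S.z0 x) y)) (S.add (S.z0 x) (S.z0 y)) := by
              ac_rfl
        _ = S.add (S.z0 (S.br x y)) (S.add (S.z0 x) (S.z0 y)) := by rw [← hLB]
        _ = S.z0 (S.br x y) := by rw [← hLC]
    exact key.symm
  · intro hc x
    have h2 : (2 : F) ≠ 0 := Ring.two_ne_zero hc
    have hskew : S.br x x = S.neg (S.br x x) := S.br_skew x x
    have hdbl : S.add (S.br x x) (S.br x x) = S.z0 (S.br x x) := by
      rw [z0_def]
      nth_rewrite 2 [hskew]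
      rfl
    have h20 : S.smul 2 (S.br x x) = S.smul 0 (S.br x x) := by
      calc S.smul 2 (S.br x x)
          = S.add (S.smul 1 (S.br x x)) (S.smul 1 (S.br x x)) := by
            rw [← S.add_smul']; norm_num
        _ = S.add (S.br x x) (S.br x x) := by rw [S.one_smul']
        _ = S.z0 (S.br x x) := hdbl
        _ = S.smul 0 (S.br x x) := z0_eq _
    have hidem : S.br x x = S.z0 (S.br x x) := by
      calc S.br x x = S.smul 1 (S.br x x) := (S.one_smul' _).symm
        _ = S.smul (2⁻¹ * 2) (S.br x x) := by rw [inv_mul_cancel₀ h2]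
        _ = S.smul 2⁻¹ (S.smul 2 (S.br x x)) := (S.smul_smul' _ _ _).symm
        _ = S.smul 2⁻¹ (S.smul 0 (S.br x x)) := by rw [h20]
        _ = S.smul (2⁻¹ * 0) (S.br x x) := S.smul_smul' _ _ _
        _ = S.smul 0 (S.br x x) := by norm_num
        _ = S.z0 (S.br x x) := (z0_eq _).symm
    have hle : S.le (S.z0 (S.br x x)) (S.z0 x) := by
      have h := InvSemivectorSpace.le_trans' (T := S.toInvSemivectorSpace) (z0_br_le_left x x) (br_z0_le x x)
      rwa [show S.add (S.z0 x) (S.z0 x) = S.z0 x from z0_idem x] at h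
    rw [hidem]
    exact hle
end

section
/- Let S be a semilattice of Lie algebras over a field F, i.e. a Lie inverse semialgebra satisfying 0_{[x,y]} = 0_{x+y} for all x, y ∈ S. Then [[x,y],z] + [[y,z],x] + [[z,x],y] = 0_{x+y+z} for all x, y, z ∈ S. Moreover, if char F ≠ 2, then [x,x] = 0_x for all x ∈ S. -/
section Aux

variable {F : Type*} [Field F] {V : Type*} (S : LieInvSemialgebra F V)

lemma my_add_left_comm (x y z : V) :
    S.add x (S.add y z) = S.add y (S.add x z) := by
  rw [← S.add_assoc', S.add_comm' x y, S.add_assoc']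

/-- Uniqueness of inverses in a commutative inverse semigroup. -/
lemma my_inv_unique (a b c : V)
    (hb1 : S.add (S.add a b) a = a) (hb2 : S.add (S.add b a) b = b)
    (hc1 : S.add (S.add a c) a = a) (hc2 : S.add (S.add c a) c = c) :
    b = c := by
  have hab : S.add (S.add a b) (S.add a b) = S.add a b := by
    rw [← S.add_assoc' (S.add a b) a b, hb1]
  have hac : S.add (S.add a c) (S.add a c) = S.add a c := by
    rw [← S.add_assoc' (S.add a c) a c, hc1]
  have hb' : b = S.add (S.add a b) c := by
    conv_lhs => rw [← hb2]
    conv_lhs => rw [← hc1]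
    rw [← hab]
    simp only [S.add_assoc', S.add_comm', my_add_left_comm]
  have hc' : c = S.add (S.add a c) b := by
    conv_lhs => rw [← hc2]
    conv_lhs => rw [← hb1]
    rw [← hac]
    simp only [S.add_assoc', S.add_comm', my_add_left_comm]
  calc b = S.add (S.add a b) c := hb'
    _ = S.add (S.add a c) b := by
        simp only [S.add_assoc', S.add_comm', my_add_left_comm]
    _ = c := hc'.symm

lemma my_neg_add (x y : V) :
    S.neg (S.add x y) = S.add (S.neg x) (S.neg y) := by
  refine my_inv_unique S (S.add x y) _ _ (S.add_neg_add _) (S.neg_add_neg _) ?_ ?_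
  · have h1 : S.add (S.add (S.add x y) (S.add (S.neg x) (S.neg y))) (S.add x y)
        = S.add (S.add (S.add x (S.neg x)) x) (S.add (S.add y (S.neg y)) y) := by
      simp only [S.add_assoc', S.add_comm', my_add_left_comm]
    rw [h1, S.add_neg_add, S.add_neg_add]
  · have h1 : S.add (S.add (S.add (S.neg x) (S.neg y)) (S.add x y)) (S.add (S.neg x) (S.neg y))
        = S.add (S.add (S.add (S.neg x) x) (S.neg x)) (S.add (S.add (S.neg y) y) (S.neg y)) := by
      simp only [S.add_assoc', S.add_comm', my_add_left_comm]
    rw [h1, S.neg_add_neg, S.neg_add_neg]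

lemma my_z0_add (x y : V) :
    S.z0 (S.add x y) = S.add (S.z0 x) (S.z0 y) := by
  show S.add (S.add x y) (S.neg (S.add x y)) = _
  rw [my_neg_add]
  show _ = S.add (S.add x (S.neg x)) (S.add y (S.neg y))
  simp only [S.add_assoc', S.add_comm', my_add_left_comm]

lemma my_z0_idem (x : V) : S.add (S.z0 x) (S.z0 x) = S.z0 x := by
  show S.add (S.add x (S.neg x)) (S.add x (S.neg x)) = S.add x (S.neg x)
  have h1 : S.add (S.add x (S.neg x)) (S.add x (S.neg x))
      = S.add (S.add (S.add x (S.neg x)) x) (S.neg x) := by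
    simp only [S.add_assoc', S.add_comm', my_add_left_comm]
  rw [h1, S.add_neg_add]

lemma my_smul_idem {α : F} (hα : α ≠ 0) {e : V} (he : S.add e e = e) :
    S.smul α e = e := by
  have key : ∀ β : F, β ≠ 0 → ∀ f : V, S.add f f = f →
      S.smul β f = S.add (S.smul β f) f := by
    intro β hβ f hf
    have hβf : S.add (S.smul β f) (S.smul β f) = S.smul β f := by
      rw [← S.smul_add', hf]
    have h1 := S.smul_br β hβ f f
    rw [S.br_idem f f hf hf, hf, S.br_idem _ f hβf hf] at h1
    exact h1
  have k1 := key α hα e he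
  have hαe : S.add (S.smul α e) (S.smul α e) = S.smul α e := by
    rw [← S.smul_add', he]
  have k2 := key α⁻¹ (inv_ne_zero hα) (S.smul α e) hαe
  rw [S.smul_smul', inv_mul_cancel₀ hα, S.one_smul'] at k2
  rw [k1, S.add_comm']
  exact k2.symm

end Aux

theorem stmt_11 {F : Type*} [Field F] {V : Type*} (S : LieInvSemialgebra F V)
    (hsem : ∀ x y : V, S.z0 (S.br x y) = S.z0 (S.add x y)) :
    (∀ x y z : V,
      S.add (S.add (S.br (S.br x y) z) (S.br (S.br y z) x)) (S.br (S.br z x) y) =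
        S.z0 (S.add (S.add x y) z)) ∧
    (ringChar F ≠ 2 → ∀ x : V, S.br x x = S.z0 x) := by
  constructor
  · intro x y z
    have hA : S.z0 (S.br (S.br x y) z) = S.z0 (S.add (S.add x y) z) := by
      rw [hsem, my_z0_add, hsem, ← my_z0_add]
    have hB : S.z0 (S.br (S.br y z) x) = S.z0 (S.add (S.add x y) z) := by
      rw [hsem, my_z0_add, hsem, ← my_z0_add]
      congr 1
      simp only [S.add_assoc', S.add_comm', my_add_left_comm]
    have hC : S.z0 (S.br (S.br z x) y) = S.z0 (S.add (S.add x y) z) := by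
      rw [hsem, my_z0_add, hsem, ← my_z0_add]
      congr 1
      simp only [S.add_assoc', S.add_comm', my_add_left_comm]
    have hz0J : S.z0 (S.add (S.add (S.br (S.br x y) z) (S.br (S.br y z) x)) (S.br (S.br z x) y))
        = S.z0 (S.add (S.add x y) z) := by
      rw [my_z0_add, my_z0_add, hA, hB, hC, my_z0_idem, my_z0_idem]
    have hJ : S.add (S.add (S.br (S.br x y) z) (S.br (S.br y z) x)) (S.br (S.br z x) y)
        = S.add (S.z0 (S.add (S.add x y) z))
            (S.z0 (S.add (S.add (S.br (S.br x y) z) (S.br (S.br y z) x)) (S.br (S.br z x) y))) :=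
      S.jacobi_le x y z
    rw [hJ, hz0J, my_z0_idem]
  · intro hc x
    have h2 : (2:F) ≠ 0 := Ring.two_ne_zero hc
    have hsum : S.add (S.br x x) (S.br x x) = S.z0 x := by
      nth_rewrite 2 [S.br_skew x x]
      show S.z0 (S.br x x) = _
      rw [hsem, my_z0_add, my_z0_idem]
    have h2s : S.smul 2 (S.br x x) = S.z0 x := by
      rw [show (2:F) = 1 + 1 from one_add_one_eq_two.symm, S.add_smul', S.one_smul', hsum]
    have hstep : S.br x x = S.smul 2⁻¹ (S.smul 2 (S.br x x)) := by
      rw [S.smul_smul', inv_mul_cancel₀ h2, S.one_smul']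
    rw [hstep, h2s]
    exact my_smul_idem S (inv_ne_zero h2) (my_z0_idem S x)
end

section
/- Let L be a Lie algebra over a field F and let S be a Lie inverse semialgebra over F that has an additive identity 0 (so (S,+) is a commutative inverse monoid) and satisfies 0_{[x,y]} = [0_x, y] + [x, 0_y] for all x, y ∈ S. Let ρ : L → S be a premorphism with ρ(0) = 0, and let τ : L → E(L) be given by τ(a) = (F·a, a). Then the map ρ̃ : E(L) → S defined by ρ̃(A,a) = 0_{ρ(x₁)} + ⋯ + 0_{ρ(x_k)} + ρ(a), for any finite spanning set {x₁,…,x_k} of A, is well defined (independent of the spanning set), and it is the unique map η : E(L) → S satisfying η(u+v) = η(u) + η(v) for all u, v ∈ E(L), η(α•u) = α•η(u) for all u ∈ E(L) and nonzero α ∈ F, and η ∘ τ = ρ. Moreover, writing m_A := 0_{ρ(x₁)} + ⋯ + 0_{ρ(x_k)} for any finite spanning set {x₁,…,x_k} of A, one has [ρ̃(A,a), ρ̃(B,b)] = ρ̃([(A,a),(B,b)]) + [ρ(a), m_B] + [m_A, ρ(b)] for all (A,a), (B,b) ∈ E(L). -/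
/-- `E(L)`: pairs `(A, a)` where `A` is a finite-dimensional subspace of the Lie
algebra `L` and `a ∈ A`. -/
def EL (F : Type*) [Field F] (L : Type*) [LieRing L] [LieAlgebra F L] :=
  {p : Submodule F L × L // FiniteDimensional F p.1 ∧ p.2 ∈ p.1}

namespace EL

variable {F : Type*} [Field F] {L : Type*} [LieRing L] [LieAlgebra F L]

/-- `(A,a) + (B,b) = (A + B, a + b)`. -/
def add (u v : EL F L) : EL F L :=
  ⟨(u.1.1 ⊔ v.1.1, u.1.2 + v.1.2),
    haveI := u.2.1
    haveI := v.2.1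
    ⟨Submodule.finiteDimensional_sup _ _,
      Submodule.add_mem _ (Submodule.mem_sup_left u.2.2) (Submodule.mem_sup_right v.2.2)⟩⟩

/-- `neg (A,a) = (A, -a)`. -/
def neg (u : EL F L) : EL F L :=
  ⟨(u.1.1, -u.1.2), ⟨u.2.1, Submodule.neg_mem _ u.2.2⟩⟩

/-- `α • (A,a) = (A, α • a)`. -/
def smul (α : F) (u : EL F L) : EL F L :=
  ⟨(u.1.1, α • u.1.2), ⟨u.2.1, Submodule.smul_mem _ _ u.2.2⟩⟩

/-- `[(A,a),(B,b)] = (A + B + F⁅a,b⁆, ⁅a,b⁆)`. -/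
def br (u v : EL F L) : EL F L :=
  ⟨(u.1.1 ⊔ v.1.1 ⊔ Submodule.span F {⁅u.1.2, v.1.2⁆}, ⁅u.1.2, v.1.2⁆),
    haveI := u.2.1
    haveI := v.2.1
    ⟨Submodule.finiteDimensional_sup _ _,
      Submodule.mem_sup_right (Submodule.mem_span_singleton_self _)⟩⟩

/-- `0_u = u + neg u`. -/
def z0 (u : EL F L) : EL F L := add u (neg u)

/-- The natural partial order on `E(L)`. -/
def le (u v : EL F L) : Prop := u = add v (z0 u)

/-- The zero element `(0, 0)` of `E(L)`. -/
def zero : EL F L :=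
  ⟨(⊥, 0), ⟨inferInstance, Submodule.zero_mem _⟩⟩

end EL

/-- The map `τ : L → E(L)`, `a ↦ (F·a, a)`. -/
def tau {F : Type*} [Field F] {L : Type*} [LieRing L] [LieAlgebra F L]
    (a : L) : EL F L :=
  ⟨(Submodule.span F {a}, a),
    ⟨inferInstance, Submodule.mem_span_singleton_self a⟩⟩

/-- Iterated sum `f 0 + f 1 + ⋯ + f n` with respect to a binary operation. -/
def finSum {V : Type*} (add : V → V → V) : {n : ℕ} → (Fin (n + 1) → V) → V
  | 0, f => f 0
  | _ + 1, f => add (finSum add fun i => f i.castSucc) (f (Fin.last _))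

section AuxBase

variable {F : Type*} [Field F] {V : Type*} (P : InvSemivectorSpace F V)

instance : Std.Associative P.add := ⟨P.add_assoc'⟩
instance : Std.Commutative P.add := ⟨P.add_comm'⟩

/-- uniqueness of inverses in a commutative semigroup -/
theorem aux_inv_unique (x u v : V)
    (hu1 : P.add (P.add x u) x = x) (hu2 : P.add (P.add u x) u = u)
    (hv1 : P.add (P.add x v) x = x) (hv2 : P.add (P.add v x) v = v) :
    u = v := by
  have h1 : u = P.add u (P.add v x) := by
    calc u = P.add (P.add u x) u := hu2.symm
      _ = P.add (P.add u (P.add (P.add x v) x)) u := by rw [hv1]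
      _ = P.add (P.add (P.add u x) u) (P.add v x) := by ac_rfl
      _ = P.add u (P.add v x) := by rw [hu2]
  have h2 : v = P.add v (P.add u x) := by
    calc v = P.add (P.add v x) v := hv2.symm
      _ = P.add (P.add v (P.add (P.add x u) x)) v := by rw [hu1]
      _ = P.add (P.add (P.add v x) v) (P.add u x) := by ac_rfl
      _ = P.add v (P.add u x) := by rw [hv2]
  calc u = P.add u (P.add v x) := h1
    _ = P.add v (P.add u x) := by ac_rfl
    _ = v := h2.symm

theorem aux_neg_eq (x : V) : P.neg x = P.smul (-1) x := by
  apply aux_inv_unique P x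
  · exact P.add_neg_add x
  · exact P.neg_add_neg x
  · calc P.add (P.add x (P.smul (-1) x)) x
        = P.add (P.add (P.smul 1 x) (P.smul (-1) x)) (P.smul 1 x) := by rw [P.one_smul']
      _ = P.smul ((1 + (-1)) + 1) x := by rw [P.add_smul', P.add_smul']
      _ = P.smul 1 x := by norm_num
      _ = x := P.one_smul' x
  · calc P.add (P.add (P.smul (-1) x) x) (P.smul (-1) x)
        = P.add (P.add (P.smul (-1) x) (P.smul 1 x)) (P.smul (-1) x) := by rw [P.one_smul']
      _ = P.smul (((-1) + 1) + (-1)) x := by rw [P.add_smul', P.add_smul']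
      _ = P.smul (-1) x := by norm_num

theorem aux_z0_eq (x : V) : P.z0 x = P.smul 0 x := by
  rw [InvSemivectorSpace.z0, aux_neg_eq]
  calc P.add x (P.smul (-1) x) = P.add (P.smul 1 x) (P.smul (-1) x) := by rw [P.one_smul']
    _ = P.smul (1 + (-1)) x := (P.add_smul' _ _ _).symm
    _ = P.smul 0 x := by norm_num

theorem aux_neg_add (x y : V) :
    P.neg (P.add x y) = P.add (P.neg x) (P.neg y) := by
  rw [aux_neg_eq, aux_neg_eq, aux_neg_eq, P.smul_add']

theorem aux_z0_add (x y : V) : P.z0 (P.add x y) = P.add (P.z0 x) (P.z0 y) := by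
  rw [aux_z0_eq, aux_z0_eq, aux_z0_eq, P.smul_add']

theorem aux_z0_smul (α : F) (x : V) : P.z0 (P.smul α x) = P.z0 x := by
  rw [aux_z0_eq, aux_z0_eq, P.smul_smul', zero_mul]

theorem aux_z0_idem (x : V) : P.add (P.z0 x) (P.z0 x) = P.z0 x := by
  rw [aux_z0_eq, ← P.add_smul', zero_add]

theorem aux_z0_z0 (x : V) : P.z0 (P.z0 x) = P.z0 x := by
  rw [aux_z0_eq P x, aux_z0_smul]
  exact aux_z0_eq P x

theorem aux_z0_add_self (x : V) : P.add (P.z0 x) x = x := P.add_neg_add x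

theorem aux_smul_idem {e : V} (he : P.add e e = e) (α : F) : P.smul α e = e := by
  have hgen : ∀ α β : F, P.add (P.smul α e) (P.smul β e) = P.smul α e := by
    intro α β
    have hb : P.add (P.smul β e) (P.smul β e) = P.smul β e := by
      rw [← P.smul_add', he]
    have h1 : P.smul α e
        = P.add (P.add (P.smul α e) (P.smul β e)) (P.smul (-β) e) := by
      calc P.smul α e = P.smul ((α + β) + (-β)) e := by ring_nf
        _ = P.add (P.add (P.smul α e) (P.smul β e)) (P.smul (-β) e) := by
              rw [P.add_smul', P.add_smul']
    calc P.add (P.smul α e) (P.smul β e)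
        = P.add (P.add (P.add (P.smul α e) (P.smul β e)) (P.smul (-β) e)) (P.smul β e) := by
          conv_lhs => rw [h1]
      _ = P.add (P.add (P.smul α e) (P.smul (-β) e)) (P.add (P.smul β e) (P.smul β e)) := by
          ac_rfl
      _ = P.add (P.add (P.smul α e) (P.smul (-β) e)) (P.smul β e) := by rw [hb]
      _ = P.add (P.add (P.smul α e) (P.smul β e)) (P.smul (-β) e) := by ac_rfl
      _ = P.smul α e := h1.symm
  calc P.smul α e = P.add (P.smul α e) (P.smul 1 e) := (hgen α 1).symm
    _ = P.add (P.smul 1 e) (P.smul α e) := P.add_comm' _ _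
    _ = P.smul 1 e := hgen 1 α
    _ = e := P.one_smul' e

end AuxBase

section AuxFinSum

variable {F : Type*} [Field F] {V : Type*} (P : InvSemivectorSpace F V)

theorem aux_finSum_idem : ∀ {k : ℕ} (f : Fin (k + 1) → V),
    (∀ i, P.add (f i) (f i) = f i) →
    P.add (finSum P.add f) (finSum P.add f) = finSum P.add f := by
  intro k
  induction k with
  | zero => intro f hf; exact hf 0
  | succ n ih =>
    intro f hf
    show P.add (P.add (finSum P.add fun i => f i.castSucc) (f (Fin.last _)))
        (P.add (finSum P.add fun i => f i.castSucc) (f (Fin.last _)))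
      = P.add (finSum P.add fun i => f i.castSucc) (f (Fin.last _))
    calc P.add (P.add (finSum P.add fun i => f i.castSucc) (f (Fin.last _)))
          (P.add (finSum P.add fun i => f i.castSucc) (f (Fin.last _)))
        = P.add (P.add (finSum P.add fun i => f i.castSucc) (finSum P.add fun i => f i.castSucc))
            (P.add (f (Fin.last _)) (f (Fin.last _))) := by ac_rfl
      _ = P.add (finSum P.add fun i => f i.castSucc) (f (Fin.last _)) := by
            rw [ih _ fun i => hf i.castSucc, hf]

theorem aux_finSum_absorb : ∀ {k : ℕ} (f : Fin (k + 1) → V),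
    (∀ i, P.add (f i) (f i) = f i) → ∀ i,
    P.add (finSum P.add f) (f i) = finSum P.add f := by
  intro k
  induction k with
  | zero =>
    intro f hf i
    have h : i = 0 := Fin.ext (Nat.lt_one_iff.mp i.isLt)
    rw [h]
    exact hf 0
  | succ n ih =>
    intro f hf i
    induction i using Fin.lastCases with
    | last =>
      show P.add (P.add (finSum P.add fun i => f i.castSucc) (f (Fin.last _))) (f (Fin.last _))
        = P.add (finSum P.add fun i => f i.castSucc) (f (Fin.last _))
      rw [P.add_assoc', hf]
    | cast j =>
      show P.add (P.add (finSum P.add fun i => f i.castSucc) (f (Fin.last _))) (f j.castSucc)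
        = P.add (finSum P.add fun i => f i.castSucc) (f (Fin.last _))
      calc P.add (P.add (finSum P.add fun i => f i.castSucc) (f (Fin.last _))) (f j.castSucc)
          = P.add (P.add (finSum P.add fun i => f i.castSucc) (f j.castSucc)) (f (Fin.last _)) := by
            ac_rfl
        _ = P.add (finSum P.add fun i => f i.castSucc) (f (Fin.last _)) := by
            rw [ih _ (fun i => hf i.castSucc) j]

end AuxFinSum

section AuxAppend

variable {α : Type*}

theorem aux_append_castSucc {m n : ℕ} (f : Fin m → α) (g : Fin (n + 1) → α) :
    (Fin.append f g) ∘ Fin.castSucc = Fin.append f (g ∘ Fin.castSucc) := by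
  funext i
  induction i using Fin.addCases with
  | left i =>
    have h : Fin.castSucc (Fin.castAdd n i) = Fin.castAdd (n + 1) i := by
      ext; simp
    simp only [Function.comp_apply, h, Fin.append_left]
  | right i =>
    have h : Fin.castSucc (Fin.natAdd m i) = Fin.natAdd m i.castSucc := by
      ext; simp
    simp only [Function.comp_apply, h, Fin.append_right]

theorem aux_append_last {m n : ℕ} (f : Fin m → α) (g : Fin (n + 1) → α) :
    Fin.append f g (Fin.last (m + n)) = g (Fin.last n) := by
  have h : Fin.last (m + n) = Fin.natAdd m (Fin.last n) := by ext; simp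
  rw [h, Fin.append_right]

theorem aux_append_fin_one {m : ℕ} (f : Fin (m + 1) → α) (g : Fin 1 → α) :
    (Fin.append f g) ∘ Fin.castSucc = f := by
  funext i
  have h : Fin.castSucc i = Fin.castAdd 1 i := by ext; simp
  show Fin.append f g i.castSucc = f i
  rw [h, Fin.append_left]

theorem aux_comp_append {β : Type*} {m n : ℕ} (h : α → β) (f : Fin m → α) (g : Fin n → α) :
    h ∘ Fin.append f g = Fin.append (h ∘ f) (h ∘ g) := by
  funext i
  induction i using Fin.addCases with
  | left i => simp [Fin.append_left]
  | right i => simp [Fin.append_right]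

theorem aux_range_append {m n : ℕ} (f : Fin m → α) (g : Fin n → α) :
    Set.range (Fin.append f g) = Set.range f ∪ Set.range g := by
  apply subset_antisymm
  · rintro a ⟨i, rfl⟩
    induction i using Fin.addCases with
    | left i => left; exact ⟨i, (Fin.append_left f g i).symm⟩
    | right i => right; exact ⟨i, (Fin.append_right f g i).symm⟩
  · rintro a (⟨i, rfl⟩ | ⟨i, rfl⟩)
    · exact ⟨Fin.castAdd n i, Fin.append_left f g i⟩
    · exact ⟨Fin.natAdd m i, Fin.append_right f g i⟩

theorem aux_range_castSucc {n : ℕ} (x : Fin (n + 1) → α) :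
    Set.range x = Set.range (fun i : Fin n => x i.castSucc) ∪ {x (Fin.last n)} := by
  apply subset_antisymm
  · rintro a ⟨i, rfl⟩
    induction i using Fin.lastCases with
    | last => right; rfl
    | cast j => left; exact ⟨j, rfl⟩
  · rintro a (⟨j, rfl⟩ | h)
    · exact ⟨j.castSucc, rfl⟩
    · exact ⟨Fin.last n, h.symm⟩

end AuxAppend

section AuxSplit

variable {F : Type*} [Field F] {V : Type*} (P : InvSemivectorSpace F V)

theorem aux_finSum_append : ∀ {m : ℕ} {k : ℕ} (f : Fin (k + 1) → V) (g : Fin (m + 1) → V),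
    finSum (n := k + 1 + m) P.add (Fin.append (m := k + 1) (n := m + 1) f g) = P.add (finSum P.add f) (finSum P.add g) := by
  intro m
  induction m with
  | zero =>
    intro k f g
    have h1 : (fun i : Fin (k + 1) => Fin.append f g i.castSucc) = f :=
      funext fun i => Fin.append_left f g i
    have h2 : Fin.append f g (Fin.last (k + 1)) = g (Fin.last 0) :=
      Fin.append_right f g (Fin.last 0)
    show P.add (finSum P.add (fun i : Fin (k + 1) => Fin.append f g i.castSucc))
        (Fin.append f g (Fin.last (k + 1))) = P.add (finSum P.add f) (finSum P.add g)
    rw [h1, h2]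
    rfl
  | succ n ih =>
    intro k f g
    have h1 : (fun i : Fin (k + 1 + (n + 1)) => Fin.append f g i.castSucc)
        = Fin.append f (fun i : Fin (n + 1) => g i.castSucc) := by
      funext i
      induction i using Fin.addCases with
      | left i => exact (Fin.append_left f g i).trans (Fin.append_left f _ i).symm
      | right i =>
        exact (Fin.append_right f g i.castSucc).trans
          (Fin.append_right f (fun j : Fin (n + 1) => g j.castSucc) i).symm
    have h2 : Fin.append f g (Fin.last (k + 1 + (n + 1))) = g (Fin.last (n + 1)) :=
      Fin.append_right f g (Fin.last (n + 1))
    show P.add (finSum P.add (fun i : Fin (k + 1 + (n + 1)) => Fin.append f g i.castSucc))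
        (Fin.append f g (Fin.last (k + 1 + (n + 1)))) = P.add (finSum P.add f) (finSum P.add g)
    rw [h1, h2, ih]
    show P.add (P.add (finSum P.add f) (finSum P.add fun i => g i.castSucc)) (g (Fin.last (n + 1)))
      = P.add (finSum P.add f) (P.add (finSum P.add fun i => g i.castSucc) (g (Fin.last (n + 1))))
    rw [P.add_assoc']

end AuxSplit

section AuxRho

variable {F : Type*} [Field F] {L : Type*} [LieRing L] [LieAlgebra F L] {T : Type*}

def auxM (S : LieInvSemialgebra F T) (ρ : L → T) {k : ℕ} (x : Fin (k + 1) → L) : T :=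
  finSum S.add fun i => S.z0 (ρ (x i))

variable (S : LieInvSemialgebra F T) (ρ : L → T)

theorem aux_M_idem {k : ℕ} (x : Fin (k + 1) → L) :
    S.add (auxM S ρ x) (auxM S ρ x) = auxM S ρ x :=
  aux_finSum_idem _ _ fun _ => aux_z0_idem _ _

theorem aux_M_absorb_range {k : ℕ} (x : Fin (k + 1) → L) :
    ∀ v ∈ Set.range x, S.add (auxM S ρ x) (S.z0 (ρ v)) = auxM S ρ x := by
  rintro v ⟨i, rfl⟩
  exact aux_finSum_absorb _ _ (fun _ => aux_z0_idem _ _) i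

variable (zS : T) (hzero : ∀ t : T, S.add zS t = t)
  (hadd : ∀ x y : L, S.le (S.add (ρ x) (ρ y)) (ρ (x + y)))
  (hsmul : ∀ (α : F), α ≠ 0 → ∀ x : L, ρ (α • x) = S.smul α (ρ x))
  (hzeroρ : ρ 0 = zS)

include hzero hadd hsmul hzeroρ in
theorem aux_abs_span (s : Set L) (E : T)
    (hgen : ∀ v ∈ s, S.add E (S.z0 (ρ v)) = E) :
    ∀ v ∈ Submodule.span F s, S.add E (S.z0 (ρ v)) = E := by
  have hz0 : S.add E (S.z0 (ρ 0)) = E := by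
    rw [hzeroρ]
    have hidem : S.add zS zS = zS := hzero zS
    have hzz : S.z0 zS = zS := by
      rw [aux_z0_eq]; exact aux_smul_idem _ hidem 0
    rw [hzz, S.add_comm']
    exact hzero E
  intro v hv
  induction hv using Submodule.span_induction with
  | mem v h => exact hgen v h
  | zero => exact hz0
  | add v w hv hw ihv ihw =>
    have h := hadd v w
    rw [InvSemivectorSpace.le] at h
    have h2 := congrArg S.toInvSemivectorSpace.z0 h
    rw [aux_z0_add, aux_z0_add, aux_z0_add, aux_z0_z0, aux_z0_z0] at h2
    have key : S.add (S.add (S.z0 (ρ v)) (S.z0 (ρ w))) (S.z0 (ρ (v + w)))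
        = S.add (S.z0 (ρ v)) (S.z0 (ρ w)) := by
      calc S.add (S.add (S.z0 (ρ v)) (S.z0 (ρ w))) (S.z0 (ρ (v + w)))
          = S.add (S.z0 (ρ (v + w))) (S.add (S.z0 (ρ v)) (S.z0 (ρ w))) := by ac_rfl
        _ = S.add (S.z0 (ρ v)) (S.z0 (ρ w)) := h2.symm
    calc S.add E (S.z0 (ρ (v + w)))
        = S.add (S.add (S.add E (S.z0 (ρ v))) (S.z0 (ρ w))) (S.z0 (ρ (v + w))) := by
          rw [ihv, ihw]
      _ = S.add E (S.add (S.add (S.z0 (ρ v)) (S.z0 (ρ w))) (S.z0 (ρ (v + w)))) := by ac_rfl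
      _ = S.add E (S.add (S.z0 (ρ v)) (S.z0 (ρ w))) := by rw [key]
      _ = S.add (S.add E (S.z0 (ρ v))) (S.z0 (ρ w)) := by ac_rfl
      _ = E := by rw [ihv, ihw]
  | smul α v hv ih =>
    by_cases hα : α = 0
    · rw [hα, zero_smul]; exact hz0
    · rw [hsmul α hα v, aux_z0_smul]; exact ih

theorem aux_absorb_M (E : T) :
    ∀ {m : ℕ} (y : Fin (m + 1) → L),
    (∀ v ∈ Set.range y, S.add E (S.z0 (ρ v)) = E) → S.add E (auxM S ρ y) = E := by
  intro m
  induction m with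
  | zero =>
    intro y h
    exact h (y 0) ⟨0, rfl⟩
  | succ n ih =>
    intro y h
    show S.add E (S.add (auxM S ρ fun i => y i.castSucc) (S.z0 (ρ (y (Fin.last _))))) = E
    calc S.add E (S.add (auxM S ρ fun i => y i.castSucc) (S.z0 (ρ (y (Fin.last _)))))
        = S.add (S.add E (auxM S ρ fun i => y i.castSucc)) (S.z0 (ρ (y (Fin.last _)))) := by
          rw [S.add_assoc']
      _ = E := by
          rw [ih _ fun v hv => h v (by
            obtain ⟨j, rfl⟩ := hv
            exact ⟨j.castSucc, rfl⟩)]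
          exact h _ ⟨Fin.last _, rfl⟩

include hzero hadd hsmul hzeroρ in
theorem aux_M_absorb {k : ℕ} (x : Fin (k + 1) → L) :
    ∀ v ∈ Submodule.span F (Set.range x), S.add (auxM S ρ x) (S.z0 (ρ v)) = auxM S ρ x :=
  aux_abs_span S ρ zS hzero hadd hsmul hzeroρ _ _ (aux_M_absorb_range S ρ x)

include hzero hadd hsmul hzeroρ in
theorem aux_M_eq {k m : ℕ} (x : Fin (k + 1) → L) (y : Fin (m + 1) → L)
    (h : Submodule.span F (Set.range x) = Submodule.span F (Set.range y)) :
    auxM S ρ x = auxM S ρ y := by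
  have h1 : S.add (auxM S ρ x) (auxM S ρ y) = auxM S ρ x :=
    aux_absorb_M S ρ _ _ fun v hv =>
      aux_M_absorb S ρ zS hzero hadd hsmul hzeroρ x v
        (by rw [h]; exact Submodule.subset_span hv)
  have h2 : S.add (auxM S ρ y) (auxM S ρ x) = auxM S ρ y :=
    aux_absorb_M S ρ _ _ fun v hv =>
      aux_M_absorb S ρ zS hzero hadd hsmul hzeroρ y v
        (by rw [← h]; exact Submodule.subset_span hv)
  calc auxM S ρ x = S.add (auxM S ρ x) (auxM S ρ y) := h1.symm
    _ = S.add (auxM S ρ y) (auxM S ρ x) := S.add_comm' _ _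
    _ = auxM S ρ y := h2

end AuxRho

section AuxEL

variable {F : Type*} [Field F] {L : Type*} [LieRing L] [LieAlgebra F L] {T : Type*}

theorem aux_EL_ext {u v : EL F L} (h1 : u.1.1 = v.1.1) (h2 : u.1.2 = v.1.2) : u = v :=
  Subtype.ext (Prod.ext h1 h2)

theorem aux_exists_span (A : Submodule F L) (hA : FiniteDimensional F A) :
    ∃ (k : ℕ) (x : Fin (k + 1) → L), Submodule.span F (Set.range x) = A := by
  have hfg : A.FG := (Submodule.fg_iff_finiteDimensional A).2 hA
  obtain ⟨n, s, hs⟩ := Submodule.fg_iff_exists_fin_generating_family.1 hfg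
  match n, s, hs with
  | 0, s, hs =>
    refine ⟨0, fun _ => 0, ?_⟩
    have h0 : Set.range s = ∅ := Set.range_eq_empty s
    rw [h0, Submodule.span_empty] at hs
    have h1 : Set.range (fun _ : Fin (0 + 1) => (0 : L)) = {0} := by
      apply subset_antisymm
      · rintro a ⟨i, rfl⟩; rfl
      · rintro a rfl; exact ⟨0, rfl⟩
    rw [h1, Submodule.span_zero_singleton]
    exact hs
  | (k + 1), s, hs => exact ⟨k, s, hs⟩

theorem aux_range_const_one (c : L) :
    Set.range (fun _ : Fin (0 + 1) => c) = {c} := by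
  apply subset_antisymm
  · rintro a ⟨i, rfl⟩; rfl
  · rintro a rfl; exact ⟨0, rfl⟩

variable (S : LieInvSemialgebra F T) (ρ : L → T)

theorem aux_br_split_left (e w t : T) (he : S.add e e = e) :
    S.br (S.add e w) t = S.add (S.br e t) (S.br w t) := by
  rw [S.br_skew (S.add e w) t, S.br_idem_add t w e he, aux_neg_add, ← S.br_skew, ← S.br_skew]

variable (zS : T) (hzero : ∀ t : T, S.add zS t = t)
  (hadd : ∀ x y : L, S.le (S.add (ρ x) (ρ y)) (ρ (x + y)))
  (hsmul : ∀ (α : F), α ≠ 0 → ∀ x : L, ρ (α • x) = S.smul α (ρ x))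
  (hzeroρ : ρ 0 = zS)

include hzero hadd hsmul hzeroρ in
theorem aux_M_sup {k m n : ℕ} (x : Fin (k + 1) → L) (y : Fin (m + 1) → L)
    (z : Fin (n + 1) → L)
    (h : Submodule.span F (Set.range z)
      = Submodule.span F (Set.range x) ⊔ Submodule.span F (Set.range y)) :
    auxM S ρ z = S.add (auxM S ρ x) (auxM S ρ y) := by
  have hax : S.add (auxM S ρ z) (auxM S ρ x) = auxM S ρ z :=
    aux_absorb_M S ρ _ x fun v hv =>
      aux_M_absorb S ρ zS hzero hadd hsmul hzeroρ z v
        (by rw [h]; exact Submodule.mem_sup_left (Submodule.subset_span hv))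
  have hay : S.add (auxM S ρ z) (auxM S ρ y) = auxM S ρ z :=
    aux_absorb_M S ρ _ y fun v hv =>
      aux_M_absorb S ρ zS hzero hadd hsmul hzeroρ z v
        (by rw [h]; exact Submodule.mem_sup_right (Submodule.subset_span hv))
  have h1 : S.add (auxM S ρ z) (S.add (auxM S ρ x) (auxM S ρ y)) = auxM S ρ z := by
    calc S.add (auxM S ρ z) (S.add (auxM S ρ x) (auxM S ρ y))
        = S.add (S.add (auxM S ρ z) (auxM S ρ x)) (auxM S ρ y) := by ac_rfl
      _ = auxM S ρ z := by rw [hax, hay]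
  have hgen : ∀ v ∈ (Set.range x ∪ Set.range y : Set L),
      S.add (S.add (auxM S ρ x) (auxM S ρ y)) (S.z0 (ρ v))
        = S.add (auxM S ρ x) (auxM S ρ y) := by
    rintro v (hv | hv)
    · calc S.add (S.add (auxM S ρ x) (auxM S ρ y)) (S.z0 (ρ v))
          = S.add (S.add (auxM S ρ x) (S.z0 (ρ v))) (auxM S ρ y) := by ac_rfl
        _ = S.add (auxM S ρ x) (auxM S ρ y) := by
            rw [aux_M_absorb_range S ρ x v hv]
    · calc S.add (S.add (auxM S ρ x) (auxM S ρ y)) (S.z0 (ρ v))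
          = S.add (auxM S ρ x) (S.add (auxM S ρ y) (S.z0 (ρ v))) := by ac_rfl
        _ = S.add (auxM S ρ x) (auxM S ρ y) := by
            rw [aux_M_absorb_range S ρ y v hv]
  have h2 : S.add (S.add (auxM S ρ x) (auxM S ρ y)) (auxM S ρ z)
      = S.add (auxM S ρ x) (auxM S ρ y) :=
    aux_absorb_M S ρ _ z fun v hv =>
      aux_abs_span S ρ zS hzero hadd hsmul hzeroρ _ _ hgen v
        (by rw [Submodule.span_union, ← h]; exact Submodule.subset_span hv)
  calc auxM S ρ z = S.add (auxM S ρ z) (S.add (auxM S ρ x) (auxM S ρ y)) := h1.symm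
    _ = S.add (S.add (auxM S ρ x) (auxM S ρ y)) (auxM S ρ z) := S.add_comm' _ _
    _ = S.add (auxM S ρ x) (auxM S ρ y) := h2

include hzero hadd hsmul hzeroρ in
theorem aux_eta_formula (η : EL F L → T)
    (hη1 : ∀ u v : EL F L, η (EL.add u v) = S.add (η u) (η v))
    (hη2 : ∀ (α : F), α ≠ 0 → ∀ u : EL F L, η (EL.smul α u) = S.smul α (η u))
    (hη3 : ∀ a : L, η (tau a) = ρ a) :
    ∀ (u : EL F L) (k : ℕ) (x : Fin (k + 1) → L),
      Submodule.span F (Set.range x) = u.1.1 →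
      η u = S.add (auxM S ρ x) (ρ u.1.2) := by
  have hz1 : ∀ (c : L) (u : EL F L), u.1.1 = Submodule.span F {c} → u.1.2 = 0 →
      η u = S.z0 (ρ c) := by
    intro c u h1 h2
    have hu : u = EL.add (tau c) (EL.smul (-1) (tau c)) := by
      apply aux_EL_ext
      · show u.1.1 = Submodule.span F {c} ⊔ Submodule.span F {c}
        rw [sup_idem]; exact h1
      · show u.1.2 = c + (-1 : F) • c
        rw [neg_one_smul, add_neg_cancel]; exact h2
    rw [hu, hη1, hη2 (-1) (neg_ne_zero.mpr one_ne_zero), hη3]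
    show S.add (ρ c) (S.smul (-1) (ρ c)) = S.z0 (ρ c)
    rw [InvSemivectorSpace.z0, aux_neg_eq]
  have hz : ∀ (k : ℕ) (x : Fin (k + 1) → L) (u : EL F L),
      u.1.1 = Submodule.span F (Set.range x) → u.1.2 = 0 → η u = auxM S ρ x := by
    intro k
    induction k with
    | zero =>
      intro x u h1 h2
      have hr : Set.range x = {x 0} := by
        apply subset_antisymm
        · rintro a ⟨i, rfl⟩
          have h : i = 0 := Fin.ext (Nat.lt_one_iff.mp i.isLt)
          rw [h]; rfl
        · rintro a rfl; exact ⟨0, rfl⟩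
      exact hz1 (x 0) u (by rw [h1, hr]) h2
    | succ n ih =>
      intro x u h1 h2
      have hfd1 : FiniteDimensional F
          (Submodule.span F (Set.range fun i : Fin (n + 1) => x i.castSucc)) :=
        FiniteDimensional.span_of_finite F (Set.finite_range _)
      have hu : u = EL.add
          ⟨(Submodule.span F (Set.range fun i : Fin (n + 1) => x i.castSucc), 0),
            ⟨hfd1, Submodule.zero_mem _⟩⟩
          ⟨(Submodule.span F {x (Fin.last (n + 1))}, 0),
            ⟨inferInstance, Submodule.zero_mem _⟩⟩ := by
        apply aux_EL_ext
        · show u.1.1 = Submodule.span F (Set.range fun i : Fin (n + 1) => x i.castSucc)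
            ⊔ Submodule.span F {x (Fin.last (n + 1))}
          rw [h1, aux_range_castSucc x, Submodule.span_union]
        · show u.1.2 = 0 + 0
          rw [add_zero]; exact h2
      rw [hu]
      erw [hη1, ih _ _ rfl rfl, hz1 (x (Fin.last (n + 1))) _ rfl rfl]
      rfl
  intro u k x hx
  have hu : u = EL.add ⟨(u.1.1, 0), ⟨u.2.1, Submodule.zero_mem _⟩⟩ (tau u.1.2) := by
    apply aux_EL_ext
    · show u.1.1 = u.1.1 ⊔ Submodule.span F {u.1.2}
      rw [sup_eq_left.mpr ((Submodule.span_singleton_le_iff_mem _ _).mpr u.2.2)]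
    · show u.1.2 = 0 + u.1.2
      rw [zero_add]
  calc η u = η (EL.add ⟨(u.1.1, 0), ⟨u.2.1, Submodule.zero_mem _⟩⟩ (tau u.1.2)) := by
        rw [← hu]
    _ = S.add (η ⟨(u.1.1, 0), ⟨u.2.1, Submodule.zero_mem _⟩⟩) (η (tau u.1.2)) := hη1 _ _
    _ = S.add (auxM S ρ x) (ρ u.1.2) := by
        have hwz : η ⟨(u.1.1, 0), ⟨u.2.1, Submodule.zero_mem _⟩⟩ = auxM S ρ x :=
          hz k x _ hx.symm rfl
        rw [hwz, hη3]

end AuxEL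

section AuxBr

variable {F : Type*} [Field F] {L : Type*} [LieRing L] [LieAlgebra F L] {T : Type*}
variable (S : LieInvSemialgebra F T) (ρ : L → T)
variable (zS : T) (hzero : ∀ t : T, S.add zS t = t)
  (heq : ∀ x y : T,
    S.z0 (S.br x y) = S.add (S.br (S.z0 x) y) (S.br x (S.z0 y)))
  (hadd : ∀ x y : L, S.le (S.add (ρ x) (ρ y)) (ρ (x + y)))
  (hbr : ∀ x y : L, S.le (S.br (ρ x) (ρ y)) (ρ ⁅x, y⁆))
  (hsmul : ∀ (α : F), α ≠ 0 → ∀ x : L, ρ (α • x) = S.smul α (ρ x))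
  (hzeroρ : ρ 0 = zS)

include hzero heq hadd hbr hsmul hzeroρ in
theorem aux_eta_bracket (η : EL F L → T)
    (hη1 : ∀ u v : EL F L, η (EL.add u v) = S.add (η u) (η v))
    (hη2 : ∀ (α : F), α ≠ 0 → ∀ u : EL F L, η (EL.smul α u) = S.smul α (η u))
    (hη3 : ∀ a : L, η (tau a) = ρ a) :
    ∀ (u v : EL F L) (k m : ℕ) (x : Fin (k + 1) → L) (y : Fin (m + 1) → L),
      Submodule.span F (Set.range x) = u.1.1 →
      Submodule.span F (Set.range y) = v.1.1 →
      S.br (η u) (η v) =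
        S.add
          (S.add (η (EL.br u v))
            (S.br (ρ u.1.2) (auxM S ρ y)))
          (S.br (auxM S ρ x) (ρ v.1.2)) := by
  intro u v k m x y hx hy
  have hfu : η u = S.add (auxM S ρ x) (ρ u.1.2) :=
    aux_eta_formula S ρ zS hzero hadd hsmul hzeroρ η hη1 hη2 hη3 u k x hx
  have hfv : η v = S.add (auxM S ρ y) (ρ v.1.2) :=
    aux_eta_formula S ρ zS hzero hadd hsmul hzeroρ η hη1 hη2 hη3 v m y hy
  obtain ⟨n, z, hz⟩ := aux_exists_span (EL.br u v).1.1 (EL.br u v).2.1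
  have hfbr : η (EL.br u v) = S.add (auxM S ρ z) (ρ ⁅u.1.2, v.1.2⁆) :=
    aux_eta_formula S ρ zS hzero hadd hsmul hzeroρ η hη1 hη2 hη3 (EL.br u v) n z hz
  obtain ⟨p, w, hw⟩ := aux_exists_span (u.1.1 ⊔ v.1.1)
    (haveI := u.2.1; haveI := v.2.1; Submodule.finiteDimensional_sup _ _)
  have hMw : auxM S ρ w = S.add (auxM S ρ x) (auxM S ρ y) :=
    aux_M_sup S ρ zS hzero hadd hsmul hzeroρ x y w (by rw [hw, hx, hy])
  have hMz : auxM S ρ z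
      = S.add (S.add (auxM S ρ x) (auxM S ρ y)) (S.z0 (ρ ⁅u.1.2, v.1.2⁆)) := by
    have h2 : auxM S ρ z = S.add (auxM S ρ w)
        (auxM S ρ (fun _ : Fin (0 + 1) => ⁅u.1.2, v.1.2⁆)) :=
      aux_M_sup S ρ zS hzero hadd hsmul hzeroρ w (fun _ : Fin (0 + 1) => ⁅u.1.2, v.1.2⁆) z
        (by rw [hz, hw, aux_range_const_one]; rfl)
    rw [h2, hMw]
    rfl
  -- abbreviations
  have hMx_idem : S.add (auxM S ρ x) (auxM S ρ x) = auxM S ρ x := aux_M_idem S ρ x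
  have hMy_idem : S.add (auxM S ρ y) (auxM S ρ y) = auxM S ρ y := aux_M_idem S ρ y
  have hax : S.add (auxM S ρ x) (S.z0 (ρ u.1.2)) = auxM S ρ x :=
    aux_M_absorb S ρ zS hzero hadd hsmul hzeroρ x u.1.2 (by rw [hx]; exact u.2.2)
  have hay : S.add (auxM S ρ y) (S.z0 (ρ v.1.2)) = auxM S ρ y :=
    aux_M_absorb S ρ zS hzero hadd hsmul hzeroρ y v.1.2 (by rw [hy]; exact v.2.2)
  set A := auxM S ρ x with hA
  set B := auxM S ρ y with hB
  set q1 := ρ u.1.2 with hq1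
  set q2 := ρ v.1.2 with hq2
  set c := ρ ⁅u.1.2, v.1.2⁆ with hc
  rw [hfu, hfv, hfbr, hMz]
  -- h for [q1,q2]
  have hpq : S.br q1 q2 = S.add c (S.add (S.br (S.z0 q1) q2) (S.br q1 (S.z0 q2))) := by
    have h := hbr u.1.2 v.1.2
    rw [InvSemivectorSpace.le] at h
    rw [heq q1 q2] at h
    exact h
  have habs1 : S.add (S.br A q2) (S.br (S.z0 q1) q2) = S.br A q2 := by
    calc S.add (S.br A q2) (S.br (S.z0 q1) q2)
        = S.br (S.add A (S.z0 q1)) q2 := (aux_br_split_left S A (S.z0 q1) q2 hMx_idem).symm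
      _ = S.br A q2 := by rw [hax]
  have habs2 : S.add (S.br q1 B) (S.br q1 (S.z0 q2)) = S.br q1 B := by
    calc S.add (S.br q1 B) (S.br q1 (S.z0 q2))
        = S.br q1 (S.add B (S.z0 q2)) := (S.br_idem_add q1 (S.z0 q2) B hMy_idem).symm
      _ = S.br q1 B := by rw [hay]
  have hzc : S.add (S.z0 c) c = c := aux_z0_add_self _ c
  calc S.br (S.add A q1) (S.add B q2)
      = S.add (S.br (S.add A q1) B) (S.br (S.add A q1) q2) :=
        S.br_idem_add (S.add A q1) q2 B hMy_idem
    _ = S.add (S.add (S.br A B) (S.br q1 B)) (S.add (S.br A q2) (S.br q1 q2)) := by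
        rw [aux_br_split_left S A q1 B hMx_idem, aux_br_split_left S A q1 q2 hMx_idem]
    _ = S.add (S.add (S.add A B) (S.br q1 B)) (S.add (S.br A q2)
          (S.add c (S.add (S.br (S.z0 q1) q2) (S.br q1 (S.z0 q2))))) := by
        rw [S.br_idem A B hMx_idem hMy_idem, hpq]
    _ = S.add (S.add (S.add (S.add A B) c) (S.add (S.br q1 B) (S.br q1 (S.z0 q2))))
          (S.add (S.br A q2) (S.br (S.z0 q1) q2)) := by ac_rfl
    _ = S.add (S.add (S.add (S.add A B) c) (S.br q1 B)) (S.br A q2) := by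
        rw [habs1, habs2]
    _ = S.add (S.add (S.add (S.add A B) (S.add (S.z0 c) c)) (S.br q1 B)) (S.br A q2) := by
        rw [hzc]
    _ = S.add (S.add (S.add (S.add (S.add A B) (S.z0 c)) c) (S.br q1 B)) (S.br A q2) := by
        ac_rfl

end AuxBr

/-- Exel-type theorem: for a premorphism `ρ` from a Lie algebra `L` to a Lie
inverse semialgebra `S` with zero satisfying `0_{[x,y]} = [0_x,y] + [x,0_y]`, the
map `ρ̃(A,a) = 0_{ρ(x₁)} + ⋯ + 0_{ρ(x_k)} + ρ(a)` (for any finite spanning set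
`{x₁,…,x_k}` of `A`) is well defined, is the unique linear map `η : E(L) → S` with
`η ∘ τ = ρ`, and satisfies the bracket formula. -/
theorem stmt_15 {F : Type*} [Field F] {L : Type*} [LieRing L] [LieAlgebra F L]
    {T : Type*} (S : LieInvSemialgebra F T)
    (zS : T) (hzero : ∀ t : T, S.add zS t = t)
    (heq : ∀ x y : T,
      S.z0 (S.br x y) = S.add (S.br (S.z0 x) y) (S.br x (S.z0 y)))
    (ρ : L → T)
    (hadd : ∀ x y : L, S.le (S.add (ρ x) (ρ y)) (ρ (x + y)))
    (hbr : ∀ x y : L, S.le (S.br (ρ x) (ρ y)) (ρ ⁅x, y⁆))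
    (hsmul : ∀ (α : F), α ≠ 0 → ∀ x : L, ρ (α • x) = S.smul α (ρ x))
    (hzeroρ : ρ 0 = zS) :
    -- `ρ̃` is well defined: the idempotent part does not depend on the spanning set
    (∀ (k m : ℕ) (x : Fin (k + 1) → L) (y : Fin (m + 1) → L),
      Submodule.span F (Set.range x) = Submodule.span F (Set.range y) →
      finSum S.add (fun i => S.z0 (ρ (x i))) = finSum S.add fun i => S.z0 (ρ (y i))) ∧
    -- existence and uniqueness of the linear map `η` with `η ∘ τ = ρ`
    (∃! η : EL F L → T,
      (∀ u v : EL F L, η (EL.add u v) = S.add (η u) (η v)) ∧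
      (∀ (α : F), α ≠ 0 → ∀ u : EL F L, η (EL.smul α u) = S.smul α (η u)) ∧
      (∀ a : L, η (tau a) = ρ a)) ∧
    -- any such `η` is given by the formula for `ρ̃`, and the bracket formula holds
    (∀ η : EL F L → T,
      ((∀ u v : EL F L, η (EL.add u v) = S.add (η u) (η v)) ∧
       (∀ (α : F), α ≠ 0 → ∀ u : EL F L, η (EL.smul α u) = S.smul α (η u)) ∧
       (∀ a : L, η (tau a) = ρ a)) →
      (∀ (u : EL F L) (k : ℕ) (x : Fin (k + 1) → L),
        Submodule.span F (Set.range x) = u.1.1 →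
        η u = S.add (finSum S.add fun i => S.z0 (ρ (x i))) (ρ u.1.2)) ∧
      (∀ (u v : EL F L) (k m : ℕ) (x : Fin (k + 1) → L) (y : Fin (m + 1) → L),
        Submodule.span F (Set.range x) = u.1.1 →
        Submodule.span F (Set.range y) = v.1.1 →
        S.br (η u) (η v) =
          S.add
            (S.add (η (EL.br u v))
              (S.br (ρ u.1.2) (finSum S.add fun i => S.z0 (ρ (y i)))))
            (S.br (finSum S.add fun i => S.z0 (ρ (x i))) (ρ v.1.2)))) := by
  classical
  choose kc xc hxc using fun u : EL F L => aux_exists_span u.1.1 u.2.1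
  set η0 : EL F L → T := fun u => S.add (auxM S ρ (xc u)) (ρ u.1.2) with hη0def
  have hη0_1 : ∀ u v : EL F L, η0 (EL.add u v) = S.add (η0 u) (η0 v) := by
    intro u v
    show S.add (auxM S ρ (xc (EL.add u v))) (ρ (u.1.2 + v.1.2))
      = S.add (S.add (auxM S ρ (xc u)) (ρ u.1.2)) (S.add (auxM S ρ (xc v)) (ρ v.1.2))
    have hM : auxM S ρ (xc (EL.add u v)) = S.add (auxM S ρ (xc u)) (auxM S ρ (xc v)) :=
      aux_M_sup S ρ zS hzero hadd hsmul hzeroρ (xc u) (xc v) (xc (EL.add u v))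
        (by rw [hxc (EL.add u v), hxc u, hxc v]; rfl)
    have haMu : S.add (auxM S ρ (xc u)) (S.z0 (ρ u.1.2)) = auxM S ρ (xc u) :=
      aux_M_absorb S ρ zS hzero hadd hsmul hzeroρ (xc u) u.1.2
        (by rw [hxc u]; exact u.2.2)
    have haMv : S.add (auxM S ρ (xc v)) (S.z0 (ρ v.1.2)) = auxM S ρ (xc v) :=
      aux_M_absorb S ρ zS hzero hadd hsmul hzeroρ (xc v) v.1.2
        (by rw [hxc v]; exact v.2.2)
    have habs := hadd u.1.2 v.1.2
    rw [InvSemivectorSpace.le, aux_z0_add] at habs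
    rw [hM]
    calc S.add (S.add (auxM S ρ (xc u)) (auxM S ρ (xc v))) (ρ (u.1.2 + v.1.2))
        = S.add (S.add (S.add (auxM S ρ (xc u)) (S.z0 (ρ u.1.2)))
            (S.add (auxM S ρ (xc v)) (S.z0 (ρ v.1.2)))) (ρ (u.1.2 + v.1.2)) := by
          rw [haMu, haMv]
      _ = S.add (S.add (auxM S ρ (xc u)) (auxM S ρ (xc v)))
            (S.add (ρ (u.1.2 + v.1.2)) (S.add (S.z0 (ρ u.1.2)) (S.z0 (ρ v.1.2)))) := by
          ac_rfl
      _ = S.add (S.add (auxM S ρ (xc u)) (auxM S ρ (xc v)))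
            (S.add (ρ u.1.2) (ρ v.1.2)) := by rw [← habs]
      _ = S.add (S.add (auxM S ρ (xc u)) (ρ u.1.2))
            (S.add (auxM S ρ (xc v)) (ρ v.1.2)) := by ac_rfl
  have hη0_2 : ∀ (α : F), α ≠ 0 → ∀ u : EL F L, η0 (EL.smul α u) = S.smul α (η0 u) := by
    intro α hα u
    show S.add (auxM S ρ (xc (EL.smul α u))) (ρ (α • u.1.2))
      = S.smul α (S.add (auxM S ρ (xc u)) (ρ u.1.2))
    have hM : auxM S ρ (xc (EL.smul α u)) = auxM S ρ (xc u) :=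
      aux_M_eq S ρ zS hzero hadd hsmul hzeroρ _ _
        (by rw [hxc (EL.smul α u), hxc u]; rfl)
    rw [hM, hsmul α hα, S.smul_add', aux_smul_idem _ (aux_M_idem S ρ (xc u)) α]
  have hη0_3 : ∀ a : L, η0 (tau a) = ρ a := by
    intro a
    show S.add (auxM S ρ (xc (tau a))) (ρ a) = ρ a
    have hM : auxM S ρ (xc (tau a)) = auxM S ρ (fun _ : Fin (0 + 1) => a) :=
      aux_M_eq S ρ zS hzero hadd hsmul hzeroρ _ _
        (by rw [hxc (tau a), aux_range_const_one]; rfl)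
    rw [hM]
    exact aux_z0_add_self _ (ρ a)
  refine ⟨?_, ?_, ?_⟩
  · intro k m x y h
    exact aux_M_eq S ρ zS hzero hadd hsmul hzeroρ x y h
  · refine ⟨η0, ⟨hη0_1, hη0_2, hη0_3⟩, ?_⟩
    intro η' hη'
    funext u
    obtain ⟨k, x, hx⟩ := aux_exists_span u.1.1 u.2.1
    rw [aux_eta_formula S ρ zS hzero hadd hsmul hzeroρ η' hη'.1 hη'.2.1 hη'.2.2 u k x hx,
      aux_eta_formula S ρ zS hzero hadd hsmul hzeroρ η0 hη0_1 hη0_2 hη0_3 u k x hx]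
  · intro η hη
    constructor
    · exact fun u k x hx =>
        aux_eta_formula S ρ zS hzero hadd hsmul hzeroρ η hη.1 hη.2.1 hη.2.2 u k x hx
    · exact fun u v k m x y hx hy =>
        aux_eta_bracket S ρ zS hzero heq hadd hbr hsmul hzeroρ η hη.1 hη.2.1 hη.2.2
          u v k m x y hx hy
end
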